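/- Let 0 < p < β and assume E(X_0^p) < ∞. Then for every n ≥ 1, E((b^n Y_n)^{−p}) = (Γ(β − p)/Γ(β)) · E(X_0^p) · E(W_1^p)^n. -/

import Mathlib

/-!
Unrolling the recursion gives `bⁿ Yₙ = Gₙ / (X₀ W₁ ⋯ Wₙ)`, and since the `Wₖ` and `Gₙ` are a.s.
positive, `(bⁿ Yₙ)^{-p} = Gₙ^{-p} X₀^p W₁^p ⋯ Wₙ^p` almost surely. This is a product of functions
of independent variables, so its expectation factors; the `Wₖ` are identically distributed, and
the negative Gamma moment is `E(Gₙ^{-p}) = Γ(β - p) / Γ(β)`.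
-/
open MeasureTheory Set

/-- The Beta distribution `Beta(a, c)` on `(0, 1)`. -/
noncomputable def betaMeas (a c : ℝ) : Measure ℝ :=
  (volume : Measure ℝ).withDensity fun x =>
    ENNReal.ofReal
      (if 0 < x ∧ x < 1 then
        Real.Gamma (a + c) / (Real.Gamma a * Real.Gamma c) * x ^ (a - 1) * (1 - x) ^ (c - 1)
      else 0)

/-- The Gamma distribution `Γ(lam, r)` on `(0, ∞)` with rate `lam` and shape `r`. -/
noncomputable def gammaMeas (lam r : ℝ) : Measure ℝ :=
  (volume : Measure ℝ).withDensity fun x =>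
    ENNReal.ofReal
      (if 0 < x then lam ^ r * x ^ (r - 1) * Real.exp (-(lam * x)) / Real.Gamma r else 0)

open ProbabilityTheory

theorem ae_withDensity_ofReal_ite {α : Type*} [MeasurableSpace α] {μ : Measure α}
    {q : α → Prop} [DecidablePred q] (hq : MeasurableSet {x | q x}) (f : α → ℝ) :
    ∀ᵐ x ∂μ.withDensity (fun x => ENNReal.ofReal (if q x then f x else 0)), q x := by
  rw [ae_iff]
  exact (withDensity_apply _ hq.compl).trans <| (setLIntegral_congr_fun hq.compl fun x hx => by
    rw [if_neg (show ¬q x from hx), ENNReal.ofReal_zero]).trans lintegral_zero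

theorem ae_betaMeas_mem_Ioo (a c : ℝ) : ∀ᵐ x ∂betaMeas a c, x ∈ Ioo 0 1 :=
  ae_withDensity_ofReal_ite measurableSet_Ioo _

theorem ae_gammaMeas_pos (lam r : ℝ) : ∀ᵐ x ∂gammaMeas lam r, 0 < x :=
  ae_withDensity_ofReal_ite measurableSet_Ioi _

theorem integral_rpow_gammaMeas {lam r s : ℝ} (hlam : 0 < lam) (hr : 0 < r) (hrs : 0 < r + s) :
    ∫ x, x ^ s ∂gammaMeas lam r = Real.Gamma (r + s) / (Real.Gamma r * lam ^ s) := by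
  have hΓ := Real.Gamma_pos_of_pos hr
  have hdensity : ∀ x, (ENNReal.ofReal (if 0 < x then
        lam ^ r * x ^ (r - 1) * Real.exp (-(lam * x)) / Real.Gamma r else 0)).toReal • x ^ s =
      (Ioi 0).indicator
        (fun x => lam ^ r / Real.Gamma r * (x ^ (r + s - 1) * Real.exp (-(lam * x)))) x := by
    intro x
    by_cases hx : 0 < x
    · rw [if_pos hx, indicator_of_mem (mem_Ioi.2 hx), ENNReal.toReal_ofReal (by positivity),
        smul_eq_mul, show r + s - 1 = (r - 1) + s by ring, Real.rpow_add hx]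
      ring
    · rw [if_neg hx, indicator_of_notMem (by simpa using hx)]
      simp
  rw [gammaMeas, integral_withDensity_eq_integral_toReal_smul
    (Measurable.ite measurableSet_Ioi (by fun_prop) measurable_const).ennreal_ofReal
    (ae_of_all _ fun _ => ENNReal.ofReal_lt_top)]
  simp_rw [hdensity]
  rw [integral_indicator measurableSet_Ioi, integral_const_mul,
    Real.integral_rpow_mul_exp_neg_mul_Ioi hrs hlam, one_div, Real.inv_rpow hlam.le,
    Real.rpow_add hlam]
  field_simp

theorem ProbabilityTheory.iIndepFun.integral_mul_mul_prod {Ω E : Type*} [MeasurableSpace Ω]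
    [MeasurableSpace E] {P : Measure Ω} {W G : ℕ → Ω → E} {X0 : Ω → E}
    (hindep : iIndepFun (Sum.elim W (Sum.elim G fun _ : Unit => X0)) P)
    (hWm : ∀ k, Measurable (W k)) (hGm : ∀ k, Measurable (G k)) (hX0m : Measurable X0)
    {f g h : E → ℝ} (hf : Measurable f) (hg : Measurable g) (hh : Measurable h) (m n : ℕ) :
    ∫ ω, f (G m ω) * g (X0 ω) * ∏ k ∈ Finset.range n, h (W k ω) ∂P =
      (∫ ω, f (G m ω) ∂P) * (∫ ω, g (X0 ω) ∂P) * ∏ k ∈ Finset.range n, ∫ ω, h (W k ω) ∂P := by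
  let e : Fin n ⊕ (Unit ⊕ Unit) → ℕ ⊕ (ℕ ⊕ Unit) := Sum.map Fin.val (Sum.map (fun _ => m) id)
  have he : e.Injective := Sum.map_injective.2 ⟨Fin.val_injective, Sum.map_injective.2
    ⟨fun _ _ _ => Subsingleton.elim _ _, Function.injective_id⟩⟩
  have key := (hindep.precomp he).integral_fun_prod_comp
    (f := Sum.elim (fun _ => h) (Sum.elim (fun _ => f) fun _ => g))
    (by rintro (k | _ | _) <;> simp only [e, Sum.map_inl, Sum.map_inr, Sum.elim_inl,
      Sum.elim_inr] <;> fun_prop)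
    (by rintro (k | _ | _) <;> simp only [Sum.elim_inl, Sum.elim_inr] <;> fun_prop)
  simp only [← Fin.prod_univ_eq_prod_range]
  simpa [e, Fintype.prod_sum_type, mul_comm, mul_left_comm, mul_assoc] using key

theorem eq_pow_mul_mul_prod_range_of_succ {M : Type*} [CommMonoid M] {x w : ℕ → M} {b : M}
    (h : ∀ n, x (n + 1) = b * x n * w n) (n : ℕ) :
    x n = b ^ n * (x 0 * ∏ k ∈ Finset.range n, w k) := by
  induction n with
  | zero => simp
  | succ n ih => rw [h, ih, pow_succ, Finset.prod_range_succ]; ac_rfl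

theorem Real.mul_div_mul_left_rpow_neg {a g c : ℝ} (ha : a ≠ 0) (hg : 0 ≤ g) (hc : 0 ≤ c)
    (p : ℝ) : (a * (g / (a * c))) ^ (-p) = g ^ (-p) * c ^ p := by
  rw [← mul_div_assoc, mul_div_mul_left _ _ ha, Real.div_rpow hg hc, Real.rpow_neg hc,
    div_inv_eq_mul]

theorem neg_moment_identity_general
    {Ω : Type*} [MeasurableSpace Ω] (P : Measure Ω)
    (α β b p : ℝ) (hβ : 0 < β) (hb : 0 < b) (hpβ : p < β)
    (W G : ℕ → Ω → ℝ) (X0 : Ω → ℝ) (X Y : ℕ → Ω → ℝ)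
    (hWm : ∀ n, Measurable (W n)) (hGm : ∀ n, Measurable (G n)) (hX0m : Measurable X0)
    (hW : ∀ n, Measure.map (W n) P = betaMeas α β)
    (hG : ∀ n, Measure.map (G n) P = gammaMeas 1 β)
    (hindep : ProbabilityTheory.iIndepFun
      (Sum.elim W (Sum.elim G fun _ : Unit => X0)) P)
    (hX0pos : ∀ ω, 0 < X0 ω)
    (hX0 : X 0 = X0) (hXrec : ∀ n ω, X (n + 1) ω = b * X n ω * W n ω)
    (hY : ∀ n ω, Y (n + 1) ω = G n ω / X (n + 1) ω)
    (n : ℕ) (hn : 1 ≤ n) :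
    (∫ ω, (b ^ n * Y n ω) ^ (-p) ∂P) =
      Real.Gamma (β - p) / Real.Gamma β * (∫ ω, X0 ω ^ p ∂P) * (∫ ω, W 0 ω ^ p ∂P) ^ n := by
  obtain ⟨m, rfl⟩ : ∃ m, n = m + 1 := ⟨n - 1, by omega⟩
  have hW_nonneg : ∀ k, ∀ᵐ ω ∂P, 0 ≤ W k ω := fun k =>
    ae_of_ae_map (hWm k).aemeasurable <| by
      rw [hW k]; filter_upwards [ae_betaMeas_mem_Ioo α β] with x hx using hx.1.le
  have hG_nonneg : ∀ᵐ ω ∂P, 0 ≤ G m ω :=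
    ae_of_ae_map (hGm m).aemeasurable <| by
      rw [hG m]; filter_upwards [ae_gammaMeas_pos 1 β] with x hx using hx.le
  have hintegrand : (fun ω => (b ^ (m + 1) * Y (m + 1) ω) ^ (-p)) =ᵐ[P]
      fun ω => G m ω ^ (-p) * X0 ω ^ p * ∏ k ∈ Finset.range (m + 1), W k ω ^ p := by
    filter_upwards [ae_all_iff.2 hW_nonneg, hG_nonneg] with ω hWω hGω
    have hprod : 0 ≤ ∏ k ∈ Finset.range (m + 1), W k ω := Finset.prod_nonneg fun k _ => hWω k
    rw [hY, eq_pow_mul_mul_prod_range_of_succ (x := (X · ω)) (fun n => hXrec n ω), hX0,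
      Real.mul_div_mul_left_rpow_neg (pow_ne_zero _ hb.ne') hGω
        (mul_nonneg (hX0pos ω).le hprod),
      Real.mul_rpow (hX0pos ω).le hprod, Real.finsetProd_rpow _ _ fun k _ => hWω k, mul_assoc]
  have hG_moment : ∫ ω, G m ω ^ (-p) ∂P = Real.Gamma (β - p) / Real.Gamma β := by
    rw [← integral_map (f := fun x => x ^ (-p)) (hGm m).aemeasurable (by fun_prop), hG m,
      integral_rpow_gammaMeas one_pos hβ (by linarith), Real.one_rpow, mul_one, sub_eq_add_neg]
  have hW_moment : ∀ k, ∫ ω, W k ω ^ p ∂P = ∫ ω, W 0 ω ^ p ∂P := fun k => by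
    rw [← integral_map (f := fun x => x ^ p) (hWm k).aemeasurable (by fun_prop), hW k, ← hW 0,
      integral_map (hWm 0).aemeasurable (by fun_prop)]
  rw [integral_congr_ae hintegrand,
    hindep.integral_mul_mul_prod (f := (· ^ (-p))) (g := (· ^ p)) (h := (· ^ p)) hWm hGm hX0m
      (by fun_prop) (by fun_prop) (by fun_prop),
    hG_moment, Finset.prod_congr rfl fun k _ => hW_moment k, Finset.prod_const, Finset.card_range]

/-- Moment identity: for `0 < p < β` and `E(X₀^p) < ∞`,
`E((bⁿ Y_n)^{-p}) = (Γ(β-p)/Γ(β)) E(X₀^p) E(W₁^p)ⁿ`. -/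
theorem neg_moment_identity
    {Ω : Type*} [MeasurableSpace Ω] (P : Measure Ω) [IsProbabilityMeasure P]
    (α β b p : ℝ) (hα : 0 < α) (hβ : 0 < β) (hb : 0 < b) (hp : 0 < p) (hpβ : p < β)
    (W G : ℕ → Ω → ℝ) (X0 : Ω → ℝ) (X Y : ℕ → Ω → ℝ)
    (hWm : ∀ n, Measurable (W n)) (hGm : ∀ n, Measurable (G n)) (hX0m : Measurable X0)
    (hW : ∀ n, Measure.map (W n) P = betaMeas α β)
    (hG : ∀ n, Measure.map (G n) P = gammaMeas 1 β)
    (hindep : ProbabilityTheory.iIndepFun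
      (Sum.elim W (Sum.elim G fun _ : Unit => X0)) P)
    (hX0pos : ∀ ω, 0 < X0 ω)
    (hX0 : X 0 = X0) (hXrec : ∀ n ω, X (n + 1) ω = b * X n ω * W n ω)
    (hY : ∀ n ω, Y (n + 1) ω = G n ω / X (n + 1) ω)
    (hX0int : Integrable (fun ω => X0 ω ^ p) P)
    (n : ℕ) (hn : 1 ≤ n) :
    (∫ ω, (b ^ n * Y n ω) ^ (-p) ∂P) =
      Real.Gamma (β - p) / Real.Gamma β * (∫ ω, X0 ω ^ p ∂P) * (∫ ω, W 0 ω ^ p ∂P) ^ n :=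
  neg_moment_identity_general P α β b p hβ hb hpβ W G X0 X Y hWm hGm hX0m hW hG hindep hX0pos hX0
    hXrec hY n hn
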